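/- (Wiener's theorem) Let a : 𝕋 → ℂ be given by an absolutely convergent Fourier series a(t) = ∑_{k∈ℤ} a_k t^k with ∑ |a_k| < ∞. If a(t) ≠ 0 for all t ∈ 𝕋, then 1/a also has an absolutely convergent Fourier series. Equivalently, the invertible elements of the Wiener algebra W(𝕋) are exactly the functions with no zeros on 𝕋. -/

import Mathlib

noncomputable section WienerAux

open scoped ENNReal

namespace WienerAux

/-- The shear equivalence `(k, n) ↦ (k, n - k)`. -/
def shear : ℤ × ℤ ≃ ℤ × ℤ := (Equiv.refl ℤ).prodShear fun k => Equiv.subRight k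

@[simp] lemma shear_apply (p : ℤ × ℤ) : shear p = (p.1, p.2 - p.1) := rfl

lemma summable_conv_norm {a b : ℤ → ℂ} (ha : Summable fun k => ‖a k‖)
    (hb : Summable fun k => ‖b k‖) :
    Summable fun p : ℤ × ℤ => ‖a p.1 * b (p.2 - p.1)‖ := by
  have h : Summable fun p : ℤ × ℤ => ‖a p.1 * b p.2‖ := ha.mul_norm hb
  have := (shear.summable_iff (f := fun p : ℤ × ℤ => ‖a p.1 * b p.2‖)).2 h
  simpa [Function.comp_def] using this

/-- Convolution of two sequences. -/
def conv (a b : ℤ → ℂ) (n : ℤ) : ℂ := ∑' k, a k * b (n - k)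

lemma conv_summable_norm_inner {a b : ℤ → ℂ} (ha : Summable fun k => ‖a k‖)
    (hb : Summable fun k => ‖b k‖) (n : ℤ) :
    Summable fun k => ‖a k * b (n - k)‖ :=
  (summable_conv_norm ha hb).prod_symm.prod_factor n

lemma conv_summable {a b : ℤ → ℂ} (ha : Summable fun k => ‖a k‖)
    (hb : Summable fun k => ‖b k‖) :
    Summable fun n => ‖conv a b n‖ := by
  have h1 : Summable fun n => ∑' k, ‖a k * b (n - k)‖ :=
    (summable_conv_norm ha hb).prod_symm.prod
  exact Summable.of_nonneg_of_le (fun n => norm_nonneg _)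
    (fun n => norm_tsum_le_tsum_norm (conv_summable_norm_inner ha hb n)) h1

lemma tsum_conv_norm_le {a b : ℤ → ℂ} (ha : Summable fun k => ‖a k‖)
    (hb : Summable fun k => ‖b k‖) :
    ∑' n, ‖conv a b n‖ ≤ (∑' k, ‖a k‖) * (∑' k, ‖b k‖) := by
  have h1 : Summable fun n => ∑' k, ‖a k * b (n - k)‖ :=
    (summable_conv_norm ha hb).prod_symm.prod
  have step1 : ∑' n, ‖conv a b n‖ ≤ ∑' n, ∑' k, ‖a k * b (n - k)‖ :=
    Summable.tsum_le_tsum (fun n => norm_tsum_le_tsum_norm (conv_summable_norm_inner ha hb n))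
      (conv_summable ha hb) h1
  have step2 : ∑' n, ∑' k, ‖a k * b (n - k)‖
      = ∑' p : ℤ × ℤ, ‖a p.2 * b (p.1 - p.2)‖ :=
    (Summable.tsum_prod (summable_conv_norm ha hb).prod_symm).symm
  have step3 : ∑' p : ℤ × ℤ, ‖a p.2 * b (p.1 - p.2)‖
      = ∑' p : ℤ × ℤ, ‖a p.1 * b (p.2 - p.1)‖ :=
    ((Equiv.prodComm ℤ ℤ).tsum_eq _).symm
  have step4 : ∑' p : ℤ × ℤ, ‖a p.1 * b (p.2 - p.1)‖
      = ∑' p : ℤ × ℤ, ‖a p.1 * b p.2‖ := by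
    rw [← shear.tsum_eq (fun p : ℤ × ℤ => ‖a p.1 * b p.2‖)]
    rfl
  have hprod : Summable fun p : ℤ × ℤ => ‖a p.1‖ * ‖b p.2‖ := by
    simpa [norm_mul] using ha.mul_norm hb
  have step5 : ∑' p : ℤ × ℤ, ‖a p.1 * b p.2‖ = (∑' k, ‖a k‖) * (∑' k, ‖b k‖) := by
    calc ∑' p : ℤ × ℤ, ‖a p.1 * b p.2‖ = ∑' p : ℤ × ℤ, ‖a p.1‖ * ‖b p.2‖ :=
          tsum_congr fun p => norm_mul _ _
      _ = (∑' k, ‖a k‖) * (∑' k, ‖b k‖) := (Summable.tsum_mul_tsum ha hb hprod).symm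
  linarith [step1, step2.le, step3.le, step4.le, step5.le]

/-- Sum of a convolution is the product of the sums. -/
lemma tsum_conv {f g : ℤ → ℂ} (hf : Summable fun k => ‖f k‖) (hg : Summable fun k => ‖g k‖) :
    ∑' n, conv f g n = (∑' k, f k) * (∑' k, g k) := by
  have hS := summable_conv_norm hf hg
  have h1 : Summable fun p : ℤ × ℤ => f p.2 * g (p.1 - p.2) := hS.prod_symm.of_norm
  calc ∑' n, conv f g n = ∑' (n : ℤ) (k : ℤ), f k * g (n - k) := rfl
    _ = ∑' p : ℤ × ℤ, f p.2 * g (p.1 - p.2) :=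
        (Summable.tsum_prod' h1 fun n => h1.prod_factor n).symm
    _ = ∑' p : ℤ × ℤ, f p.1 * g (p.2 - p.1) :=
        ((Equiv.prodComm ℤ ℤ).tsum_eq (fun p : ℤ × ℤ => f p.2 * g (p.1 - p.2))).symm
    _ = ∑' p : ℤ × ℤ, f p.1 * g p.2 := by
        rw [← shear.tsum_eq (fun p : ℤ × ℤ => f p.1 * g p.2)]
        exact tsum_congr fun p => rfl
    _ = (∑' k, f k) * (∑' k, g k) :=
        (Summable.tsum_mul_tsum hf.of_norm hg.of_norm (Summable.mul_norm (f := f) (g := g) hf hg).of_norm).symm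

/-! ### The Wiener algebra as `ℓ¹(ℤ, ℂ)` with convolution -/

abbrev W : Type := lp (fun _ : ℤ => ℂ) 1

instance : Fact ((1 : ℝ≥0∞) ≤ 1) := ⟨le_rfl⟩

lemma memW {f : ℤ → ℂ} (hf : Summable fun k => ‖f k‖) : Memℓp f (1 : ℝ≥0∞) :=
  memℓp_gen (by simpa using hf)

lemma summable_norm (f : W) : Summable fun k => ‖f k‖ := by
  simpa using (lp.memℓp f).summable (p := (1 : ℝ≥0∞)) (by norm_num)

/-- Constructor for elements of `W`. -/
def wMk (f : ℤ → ℂ) (hf : Summable fun k => ‖f k‖) : W := ⟨f, memW hf⟩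

@[simp] lemma wMk_apply (f : ℤ → ℂ) (hf : Summable fun k => ‖f k‖) (n : ℤ) :
    wMk f hf n = f n := rfl

lemma wExt {x y : W} (h : ∀ n, x n = y n) : x = y := Subtype.ext (funext h)

lemma norm_W (f : W) : ‖f‖ = ∑' k, ‖f k‖ := by
  rw [lp.norm_eq_tsum_rpow (by norm_num) f]
  simp [Real.rpow_one]

instance : Mul W :=
  ⟨fun x y => wMk (conv x y) (conv_summable (summable_norm x) (summable_norm y))⟩

lemma mul_apply' (x y : W) (n : ℤ) : (x * y) n = ∑' k, x k * y (n - k) := rfl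

instance : One W := ⟨wMk (fun n => if n = 0 then 1 else 0)
  (by simpa [apply_ite norm] using hasSum_ite_eq (0 : ℤ) (1 : ℝ) |>.summable)⟩

lemma one_apply' (n : ℤ) : (1 : W) n = if n = 0 then 1 else 0 := rfl

lemma mul_comm' (x y : W) : x * y = y * x := by
  refine wExt fun n => ?_
  rw [mul_apply', mul_apply']
  rw [← (Equiv.subLeft n).tsum_eq (fun k => x k * y (n - k))]
  exact tsum_congr fun k => by simp [mul_comm]

lemma one_mul' (x : W) : 1 * x = x := by
  refine wExt fun n => ?_
  rw [mul_apply']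
  rw [tsum_eq_single 0 (fun k hk => by simp [one_apply', hk])]
  simp [one_apply']

lemma left_distrib' (x y z : W) : x * (y + z) = x * y + x * z := by
  refine wExt fun n => ?_
  have h1 := (conv_summable_norm_inner (summable_norm x) (summable_norm y) n).of_norm
  have h2 := (conv_summable_norm_inner (summable_norm x) (summable_norm z) n).of_norm
  rw [lp.coeFn_add, Pi.add_apply, mul_apply', mul_apply', mul_apply']
  rw [← Summable.tsum_add h1 h2]
  exact tsum_congr fun k => by rw [lp.coeFn_add, Pi.add_apply]; ring

lemma smul_mul' (c : ℂ) (x y : W) : (c • x) * y = c • (x * y) := by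
  refine wExt fun n => ?_
  rw [lp.coeFn_smul, Pi.smul_apply, mul_apply', mul_apply', smul_eq_mul, ← tsum_mul_left]
  exact tsum_congr fun k => by rw [lp.coeFn_smul, Pi.smul_apply, smul_eq_mul]; ring

/-- Associativity of convolution. -/
lemma mul_assoc' (x y z : W) : x * y * z = x * (y * z) := by
  have hx := summable_norm x; have hy := summable_norm y; have hz := summable_norm z
  refine wExt fun n => ?_
  -- the common value
  set G : ℤ × ℤ → ℂ := fun q => x q.1 * y q.2 * z (n - q.1 - q.2) with hG
  have hzbd : ∀ m, ‖z m‖ ≤ ∑' j, ‖z j‖ := fun m => Summable.le_tsum hz m fun _ _ => norm_nonneg _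
  have hGs : Summable fun q : ℤ × ℤ => ‖G q‖ := by
    refine Summable.of_nonneg_of_le (fun q => norm_nonneg _) (fun q => ?_)
      (((hx.mul_norm hy).mul_right (∑' j, ‖z j‖)))
    calc ‖G q‖ = ‖x q.1 * y q.2‖ * ‖z (n - q.1 - q.2)‖ := norm_mul _ _
      _ ≤ ‖x q.1 * y q.2‖ * ∑' j, ‖z j‖ :=
          mul_le_mul_of_nonneg_left (hzbd _) (norm_nonneg _)
  -- LHS
  have hL : (x * y * z) n = ∑' q : ℤ × ℤ, G q := by
    have hFs : Summable fun p : ℤ × ℤ => ‖x p.2 * y (p.1 - p.2) * z (n - p.1)‖ := by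
      have := (shear.summable_iff (f := fun q : ℤ × ℤ => ‖G q‖)).2 hGs
      have h2 := ((Equiv.prodComm ℤ ℤ).summable_iff
        (f := fun q : ℤ × ℤ => ‖G (shear q)‖)).2 (by simpa [Function.comp_def] using this)
      simpa [Function.comp_def, hG, mul_comm, sub_sub] using h2
    rw [mul_apply']
    have : ∀ m : ℤ, (x * y) m * z (n - m) = ∑' k, x k * y (m - k) * z (n - m) := by
      intro m; rw [mul_apply', ← tsum_mul_right]
    rw [tsum_congr this, ← Summable.tsum_prod' hFs.of_norm fun m => (hFs.of_norm.prod_factor m)]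
    -- now change variables (m, k) ↦ (k, m - k)
    have := (((Equiv.prodComm ℤ ℤ).trans shear).tsum_eq G)
    rw [← this]
    exact tsum_congr fun p => by simp [hG, Equiv.prodComm, sub_sub, mul_comm, mul_assoc, mul_left_comm]
  -- RHS
  have hR : (x * (y * z)) n = ∑' q : ℤ × ℤ, G q := by
    have hHs : Summable fun q : ℤ × ℤ => ‖x q.1 * (y q.2 * z (n - q.1 - q.2))‖ := by
      simpa [hG, mul_assoc] using hGs
    rw [mul_apply']
    have : ∀ k : ℤ, x k * (y * z) (n - k) = ∑' j, x k * (y j * z (n - k - j)) := by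
      intro k
      rw [mul_apply', ← tsum_mul_left]
    rw [tsum_congr this, ← Summable.tsum_prod' hHs.of_norm fun k => (hHs.of_norm.prod_factor k)]
    exact tsum_congr fun q => by simp [hG, mul_assoc]
  rw [hL, hR]

instance : CommRing W :=
  { (inferInstance : AddCommGroup W) with
    mul := (· * ·)
    one := 1
    mul_assoc := mul_assoc'
    mul_comm := mul_comm'
    one_mul := one_mul'
    mul_one := fun x => by rw [mul_comm']; exact one_mul' x
    left_distrib := left_distrib'
    right_distrib := fun x y z => by
      rw [mul_comm', left_distrib', mul_comm' z x, mul_comm' z y]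
    zero_mul := fun x => by
      refine wExt fun n => ?_
      rw [mul_apply']
      simp [lp.coeFn_zero]
    mul_zero := fun x => by
      rw [mul_comm']
      refine wExt fun n => ?_
      rw [mul_apply']
      simp [lp.coeFn_zero] }

instance : NormedCommRing W :=
  { (inferInstance : CommRing W), (inferInstance : NormedAddCommGroup W) with
    norm_mul_le := fun x y => by
      rw [norm_W, norm_W, norm_W]
      exact tsum_conv_norm_le (summable_norm x) (summable_norm y) }

instance : NormedAlgebra ℂ W :=
  { (Algebra.ofModule smul_mul' fun c x y => by
      rw [mul_comm', smul_mul', mul_comm']) with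
    norm_smul_le := fun c x => (norm_smul c x).le }

lemma norm_one' : ‖(1 : W)‖ = 1 := by
  rw [norm_W]
  rw [tsum_eq_single 0 (fun k hk => by simp [one_apply', hk])]
  simp [one_apply']

instance : NormOneClass W := ⟨norm_one'⟩

instance : Nontrivial W :=
  ⟨1, 0, fun h => by
    have := congrArg (fun u : W => u 0) h
    simp only [one_apply', if_pos rfl, lp.coeFn_zero, Pi.zero_apply] at this
    exact one_ne_zero this⟩

/-- The basis elements `e m = δ_m`. -/
def e (m : ℤ) : W := wMk (fun n => if n = m then 1 else 0)
  (by simpa [apply_ite norm] using hasSum_ite_eq (m : ℤ) (1 : ℝ) |>.summable)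

lemma e_apply (m n : ℤ) : e m n = if n = m then 1 else 0 := rfl

lemma e_zero : e 0 = 1 := rfl

lemma e_mul (i j : ℤ) : e i * e j = e (i + j) := by
  refine wExt fun n => ?_
  rw [mul_apply']
  rw [tsum_eq_single i (fun k hk => by simp [e_apply, hk])]
  simp only [e_apply, if_pos rfl, one_mul]
  by_cases h : n = i + j
  · rw [if_pos h, if_pos (show n - i = j by omega)]; norm_num
  · rw [if_neg h, if_neg (show ¬ n - i = j by omega)]; norm_num

lemma norm_e (m : ℤ) : ‖e m‖ = 1 := by
  rw [norm_W]
  rw [tsum_eq_single m (fun k hk => by simp [e_apply, hk])]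
  simp [e_apply]

lemma hasSum_expansion (x : W) : HasSum (fun m => x m • e m) x := by
  have h := lp.hasSum_single (E := fun _ : ℤ => ℂ) (p := (1 : ℝ≥0∞)) (by norm_num) x
  convert h using 2 with m
  · rfl
  refine wExt fun n => ?_
  rw [lp.coeFn_smul, Pi.smul_apply]
  rw [lp.single_apply]
  simp [e_apply, Pi.single_apply, smul_eq_mul, mul_comm]

section Char

open WeakDual

variable (φ : characterSpace ℂ W)

lemma char_norm_le (x : W) : ‖φ x‖ ≤ ‖x‖ :=
  spectrum.norm_le_norm_of_mem (CharacterSpace.apply_mem_spectrum φ x)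

/-- The point on the circle associated to a character. -/
def charPoint : ℂ := φ (e 1)

lemma charPoint_mul_inv : charPoint φ * φ (e (-1)) = 1 := by
  rw [charPoint, ← map_mul, e_mul]
  norm_num [e_zero, map_one]

lemma charPoint_ne_zero : charPoint φ ≠ 0 :=
  left_ne_zero_of_mul_eq_one (charPoint_mul_inv φ)

lemma char_e_neg_one : φ (e (-1)) = (charPoint φ)⁻¹ :=
  eq_inv_of_mul_eq_one_right (charPoint_mul_inv φ)

lemma norm_charPoint : ‖charPoint φ‖ = 1 := by
  have h1 : ‖charPoint φ‖ ≤ 1 := by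
    simpa [norm_e, charPoint] using char_norm_le φ (e 1)
  have h2 : ‖(charPoint φ)⁻¹‖ ≤ 1 := by
    rw [← char_e_neg_one]
    simpa [norm_e] using char_norm_le φ (e (-1))
  have h0 : charPoint φ ≠ 0 := charPoint_ne_zero φ
  have h3 : ‖charPoint φ‖ ≠ 0 := by simpa using h0
  rw [norm_inv] at h2
  have hpos : 0 < ‖charPoint φ‖ := lt_of_le_of_ne (norm_nonneg _) (Ne.symm h3)
  have h4 : (1 : ℝ) ≤ ‖charPoint φ‖ := by
    have := mul_le_mul_of_nonneg_left h2 hpos.le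
    rwa [mul_inv_cancel₀ h3, mul_one] at this
  linarith

lemma char_e (m : ℤ) : φ (e m) = charPoint φ ^ m := by
  have h0 : charPoint φ ≠ 0 := charPoint_ne_zero φ
  induction m using Int.induction_on with
  | zero => rw [e_zero, map_one]; simp
  | succ k ih =>
    rw [← e_mul, map_mul, ih, show φ (e 1) = charPoint φ from rfl, zpow_add_one₀ h0]
  | pred k ih =>
    rw [show (-(k:ℤ) - 1) = (-(k:ℤ)) + (-1) by ring, ← e_mul, map_mul, ih, char_e_neg_one,
      zpow_add₀ h0, zpow_neg_one]

lemma char_eq_sum (x : W) : φ x = ∑' m, x m * charPoint φ ^ m := by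
  have h := (hasSum_expansion x).map (AddMonoidHomClass.toAddMonoidHom φ) (map_continuous φ)
  have heq : (⇑(AddMonoidHomClass.toAddMonoidHom φ) ∘ fun m => x m • e m)
      = fun m => x m * charPoint φ ^ m := by
    funext m
    simp [Function.comp, map_smul, char_e φ, smul_eq_mul]
  rw [heq] at h
  exact h.tsum_eq.symm

end Char

section Eval

/-- Evaluation of an `ℓ¹` sequence at a point of the circle. -/
def ev (t : ℂ) (x : W) : ℂ := ∑' m, x m * t ^ m

lemma summable_ev {t : ℂ} (ht : ‖t‖ = 1) (x : W) :
    Summable fun m => ‖x m * t ^ m‖ := by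
  have : ∀ m : ℤ, ‖x m * t ^ m‖ = ‖x m‖ := by
    intro m; rw [norm_mul, norm_zpow, ht, one_zpow, mul_one]
  exact (summable_norm x).congr fun m => (this m).symm

lemma ev_mul {t : ℂ} (ht : ‖t‖ = 1) (x y : W) : ev t (x * y) = ev t x * ev t y := by
  have ht0 : t ≠ 0 := fun h => by simp [h] at ht
  have hx' : Summable fun m => ‖x m * t ^ m‖ := summable_ev ht x
  have hy' : Summable fun m => ‖y m * t ^ m‖ := summable_ev ht y
  have key : ∀ n, (x * y) n * t ^ n
      = conv (fun k => x k * t ^ k) (fun k => y k * t ^ k) n := by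
    intro n
    rw [mul_apply', conv, ← tsum_mul_right]
    refine tsum_congr fun k => ?_
    have h : t ^ k * t ^ (n - k) = t ^ n := by rw [← zpow_add₀ ht0]; ring_nf
    calc x k * y (n - k) * t ^ n = x k * y (n - k) * (t ^ k * t ^ (n - k)) := by rw [h]
      _ = x k * t ^ k * (y (n - k) * t ^ (n - k)) := by ring
  calc ev t (x * y) = ∑' n, conv (fun k => x k * t ^ k) (fun k => y k * t ^ k) n :=
        tsum_congr key
    _ = ev t x * ev t y := tsum_conv hx' hy'

lemma ev_one (t : ℂ) : ev t 1 = 1 := by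
  rw [ev, tsum_eq_single 0 (fun k hk => by simp [one_apply', hk])]
  simp [one_apply']

end Eval

end WienerAux

/-- Wiener's theorem: If `a(t) = ∑_{k∈ℤ} a_k t^k` with `∑|a_k| < ∞` has no
zeros on the unit circle, then `1/a` also has an absolutely convergent Fourier series. -/
theorem stmt10 (a : ℤ → ℂ) (ha : Summable (fun k : ℤ => ‖a k‖))
    (hz : ∀ t : ℂ, ‖t‖ = 1 → (∑' k : ℤ, a k * t ^ k) ≠ 0) :
    ∃ c : ℤ → ℂ, Summable (fun k : ℤ => ‖c k‖) ∧
      ∀ t : ℂ, ‖t‖ = 1 → (∑' k : ℤ, c k * t ^ k) = (∑' k : ℤ, a k * t ^ k)⁻¹ := by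
  classical
  open WienerAux in
  set F : W := wMk a ha with hFdef
  have hFa : ∀ k, F k = a k := fun k => rfl
  have hunit : IsUnit F := by
    by_contra hF'
    obtain ⟨φ, hφ⟩ := WeakDual.CharacterSpace.exists_apply_eq_zero hF'
    refine hz (charPoint φ) (norm_charPoint φ) ?_
    have h2 := (char_eq_sum φ F).symm.trans hφ
    rw [← h2]
    exact tsum_congr fun k => rfl
  obtain ⟨u, hu⟩ := hunit
  refine ⟨fun k => (↑u⁻¹ : W) k, summable_norm _, fun t htt => ?_⟩
  have hmul : (↑u⁻¹ : W) * F = 1 := by rw [← hu, ← Units.val_mul, inv_mul_cancel, Units.val_one]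
  have hev := ev_mul htt (↑u⁻¹ : W) F
  rw [hmul, ev_one] at hev
  have hL : (∑' k : ℤ, (↑u⁻¹ : W) k * t ^ k) = ev t (↑u⁻¹ : W) := rfl
  have hR : (∑' k : ℤ, a k * t ^ k) = ev t F :=
    tsum_congr fun k => rfl
  rw [hL, hR]
  exact eq_inv_of_mul_eq_one_left hev.symm
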